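/- arXiv:2112.14160 — 2 statements merged into one kernel-verified Lean document; each statement's English description precedes it below -/
import Mathlib

section
/- (Principle of nil causality, deterministic part.) Let ρ be a smooth compactly supported joint density of (x_1,…,x_n), and suppose for each i ≤ r the function F_i does not depend on the coordinates x_{r+1},…,x_s, and ρ_{A∪C} denotes the marginal of ρ over (x_1,…,x_r,x_{s+1},…,x_n). Then E[ (1/ρ_A(X_A)) ∑_{i=1}^r ∫_{ℝ^{n-s}} ∂(F_i ρ_{A∪C})/∂x_i dx_C ] = 0, where ρ_A is the marginal of the first r coordinates. -/
open MeasureTheory Real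

/-- Partial derivative along the `i`-th coordinate. -/
noncomputable def pderiv' {ι : Type*} [Fintype ι] [DecidableEq ι]
    (i : ι) (f : (ι → ℝ) → ℝ) (x : ι → ℝ) : ℝ :=
  fderiv ℝ f x (Pi.single i 1)

lemma integral_deriv_zero (f : ℝ → ℝ) (hf : ContDiff ℝ 1 f) (h2f : HasCompactSupport f) :
    ∫ x, deriv f x = 0 := by
  have hder : Integrable (deriv f) :=
    ((hf.continuous_deriv le_rfl).integrable_of_hasCompactSupport h2f.deriv)
  rw [← intervalIntegral.integral_Iic_add_Ioi (b := (0:ℝ)) hder.integrableOn hder.integrableOn,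
    h2f.integral_Iic_deriv_eq hf 0, h2f.integral_Ioi_deriv_eq hf 0]
  ring

lemma hasCompactSupport_update {n : ℕ} (h : (Fin n → ℝ) → ℝ) (hs : HasCompactSupport h)
    (x : Fin n → ℝ) (i : Fin n) : HasCompactSupport (fun t => h (Function.update x i t)) := by
  apply HasCompactSupport.intro (K := (fun y : Fin n → ℝ => y i) '' tsupport h)
    (hs.image (continuous_apply i))
  intro t ht
  by_contra hne
  exact ht ⟨Function.update x i t, subset_tsupport h hne, by simp⟩

lemma integral_update_deriv_zero {n : ℕ} (i : Fin n) (h : (Fin n → ℝ) → ℝ)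
    (hh : ContDiff ℝ 1 h) (hs : HasCompactSupport h) (x : Fin n → ℝ) :
    ∫ t : ℝ, pderiv' i h (Function.update x i t) = 0 := by
  have hf : ContDiff ℝ 1 (fun t => h (Function.update x i t)) :=
    hh.comp (contDiff_update 1 x i)
  have hcs := hasCompactSupport_update h hs x i
  have hd : ∀ t : ℝ, HasDerivAt (fun t => h (Function.update x i t))
      (pderiv' i h (Function.update x i t)) t := by
    intro t
    exact ((hh.differentiable one_ne_zero) _).hasFDerivAt.comp_hasDerivAt t
      (hasDerivAt_update x i t)
  have := integral_deriv_zero _ hf hcs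
  rw [← this]
  congr 1
  ext t
  exact ((hd t).deriv).symm

/-- n-dim: integral of a partial derivative of a compactly supported C¹ function is 0. -/
lemma integral_pderiv_zero {n : ℕ} (i : Fin n) (h : (Fin n → ℝ) → ℝ)
    (hh : ContDiff ℝ 1 h) (hs : HasCompactSupport h) :
    ∫ x, pderiv' i h x = 0 := by
  cases n with
  | zero => exact i.elim0
  | succ k =>
    have hg_cont : Continuous (pderiv' i h) := by
      unfold pderiv'
      exact (hh.continuous_fderiv one_ne_zero).clm_apply continuous_const
    have hg_supp : HasCompactSupport (pderiv' i h) := by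
      have := hs.fderiv (𝕜 := ℝ)
      exact this.comp_left (g := fun L : (Fin (k+1) → ℝ) →L[ℝ] ℝ => L (Pi.single i 1)) rfl
    have hg_int : Integrable (pderiv' i h) := hg_cont.integrable_of_hasCompactSupport hg_supp
    have hmp := (MeasureTheory.volume_preserving_piFinSuccAbove (fun _ : Fin (k+1) => ℝ) i).symm
    rw [← hmp.integral_comp (MeasurableEquiv.measurableEmbedding _) (pderiv' i h)]
    have hint2 : Integrable (fun p : ℝ × (Fin k → ℝ) =>
        pderiv' i h ((MeasurableEquiv.piFinSuccAbove (fun _ => ℝ) i).symm p)) :=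
      (hmp.integrable_comp hg_int.aestronglyMeasurable).2 hg_int
    rw [MeasureTheory.Measure.volume_eq_prod] at hint2 ⊢
    rw [MeasureTheory.integral_prod_symm _ hint2]
    have : ∀ y : Fin k → ℝ, (∫ t : ℝ,
        pderiv' i h ((MeasurableEquiv.piFinSuccAbove (fun _ => ℝ) i).symm (t, y))) = 0 := by
      intro y
      have hx : ∀ t : ℝ, (MeasurableEquiv.piFinSuccAbove (fun _ : Fin (k+1) => ℝ) i).symm (t, y)
          = Function.update (i.insertNth 0 y) i t := by
        intro t
        simp [MeasurableEquiv.piFinSuccAbove, Fin.insertNthEquiv]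
      simp_rw [hx]
      exact integral_update_deriv_zero i h hh hs _
    simp_rw [this]
    simp

open MeasureTheory Real Set

section Marg

variable {r b c : ℕ}

noncomputable def Jmap (r b c : ℕ) :
    ((Fin r → ℝ) × (Fin c → ℝ)) →L[ℝ] ((Fin r → ℝ) × (Fin b → ℝ) × (Fin c → ℝ)) :=
  (ContinuousLinearMap.fst ℝ _ _).prod
    ((0 : ((Fin r → ℝ) × (Fin c → ℝ)) →L[ℝ] (Fin b → ℝ)).prod (ContinuousLinearMap.snd ℝ _ _))

variable (ρ : ((Fin r → ℝ) × (Fin b → ℝ) × (Fin c → ℝ)) → ℝ)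

lemma sliceB_integrable (hcont : Continuous ρ) (hsupp : HasCompactSupport ρ)
    (p : (Fin r → ℝ) × (Fin c → ℝ)) : Integrable (fun xb => ρ (p.1, xb, p.2)) := by
  apply Continuous.integrable_of_hasCompactSupport
  · exact hcont.comp (continuous_const.prodMk (continuous_id.prodMk continuous_const))
  · apply HasCompactSupport.intro
      (K := (fun z : (Fin r → ℝ) × (Fin b → ℝ) × (Fin c → ℝ) => z.2.1) '' tsupport ρ)
      (hsupp.image (continuous_snd.fst))
    intro xb hxb
    by_contra hne
    exact hxb ⟨(p.1, xb, p.2), subset_tsupport ρ hne, rfl⟩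

lemma insert_hasFDerivAt (xb : Fin b → ℝ) (q : (Fin r → ℝ) × (Fin c → ℝ)) :
    HasFDerivAt (fun q : (Fin r → ℝ) × (Fin c → ℝ) => (q.1, xb, q.2))
      (Jmap r b c) q := by
  have : (fun q : (Fin r → ℝ) × (Fin c → ℝ) => (q.1, xb, q.2))
      = fun q => (Jmap r b c) q + ((0 : Fin r → ℝ), xb, (0 : Fin c → ℝ)) := by
    funext q
    simp [Jmap, Prod.ext_iff]
  rw [this]
  exact (Jmap r b c).hasFDerivAt.add_const _

lemma marg_hasFDerivAt (hρs : ContDiff ℝ (⊤ : ℕ∞) ρ) (hsupp : HasCompactSupport ρ)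
    (p : (Fin r → ℝ) × (Fin c → ℝ)) :
    HasFDerivAt (fun q : (Fin r → ℝ) × (Fin c → ℝ) => ∫ xb, ρ (q.1, xb, q.2))
      (∫ xb, (fderiv ℝ ρ (p.1, xb, p.2)).comp (Jmap r b c)) p := by
  obtain ⟨Cb, hCb⟩ := (hsupp.fderiv (𝕜 := ℝ)).exists_bound_of_continuous
    (hρs.continuous_fderiv (by simp))
  set K : Set (Fin b → ℝ) :=
    (fun z : (Fin r → ℝ) × (Fin b → ℝ) × (Fin c → ℝ) => z.2.1) '' tsupport (fderiv ℝ ρ) with hK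
  have hKc : IsCompact K := (hsupp.fderiv (𝕜 := ℝ)).image (continuous_snd.fst)
  have hvanish : ∀ (q : (Fin r → ℝ) × (Fin c → ℝ)) (xb : Fin b → ℝ), xb ∉ K →
      fderiv ℝ ρ (q.1, xb, q.2) = 0 := by
    intro q xb hxb
    by_contra hne
    exact hxb ⟨(q.1, xb, q.2), subset_tsupport _ hne, rfl⟩
  apply hasFDerivAt_integral_of_dominated_of_fderiv_le (s := Metric.ball p 1) (Metric.ball_mem_nhds p one_pos)
    (bound := K.indicator fun _ => Cb * ‖Jmap r b c‖)
    (F' := fun q xb => (fderiv ℝ ρ (q.1, xb, q.2)).comp (Jmap r b c))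
  · exact Filter.Eventually.of_forall fun q =>
      ((hρs.continuous).comp
        (continuous_const.prodMk (continuous_id.prodMk continuous_const))).aestronglyMeasurable
  · exact sliceB_integrable ρ hρs.continuous hsupp p
  · exact (((hρs.continuous_fderiv (by simp)).comp
      (continuous_const.prodMk (continuous_id.prodMk continuous_const))).clm_comp
      continuous_const).aestronglyMeasurable
  · refine Filter.Eventually.of_forall fun xb q _ => ?_
    by_cases hxb : xb ∈ K
    · rw [Set.indicator_of_mem hxb]
      calc ‖(fderiv ℝ ρ (q.1, xb, q.2)).comp (Jmap r b c)‖
          ≤ ‖fderiv ℝ ρ (q.1, xb, q.2)‖ * ‖Jmap r b c‖ := ContinuousLinearMap.opNorm_comp_le _ _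
        _ ≤ Cb * ‖Jmap r b c‖ := by
            exact mul_le_mul_of_nonneg_right (hCb _) (norm_nonneg _)
    · rw [Set.indicator_of_notMem hxb, hvanish q xb hxb, ContinuousLinearMap.zero_comp]
      simp
  · exact (MeasureTheory.integrableOn_const hKc.measure_lt_top.ne).integrable_indicator
      hKc.measurableSet
  · refine Filter.Eventually.of_forall fun xb q _ => ?_
    exact ((hρs.differentiable (by simp) _).hasFDerivAt).comp q (insert_hasFDerivAt xb q)

lemma marg_fderiv_continuous (hρs : ContDiff ℝ (⊤ : ℕ∞) ρ) (hsupp : HasCompactSupport ρ) :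
    Continuous (fun p : (Fin r → ℝ) × (Fin c → ℝ) =>
      ∫ xb, (fderiv ℝ ρ (p.1, xb, p.2)).comp (Jmap r b c)) := by
  obtain ⟨Cb, hCb⟩ := (hsupp.fderiv (𝕜 := ℝ)).exists_bound_of_continuous
    (hρs.continuous_fderiv (by simp))
  set K : Set (Fin b → ℝ) :=
    (fun z : (Fin r → ℝ) × (Fin b → ℝ) × (Fin c → ℝ) => z.2.1) '' tsupport (fderiv ℝ ρ) with hK
  have hKc : IsCompact K := (hsupp.fderiv (𝕜 := ℝ)).image (continuous_snd.fst)
  have hvanish : ∀ (q : (Fin r → ℝ) × (Fin c → ℝ)) (xb : Fin b → ℝ), xb ∉ K →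
      fderiv ℝ ρ (q.1, xb, q.2) = 0 := by
    intro q xb hxb
    by_contra hne
    exact hxb ⟨(q.1, xb, q.2), subset_tsupport _ hne, rfl⟩
  apply MeasureTheory.continuous_of_dominated (bound := K.indicator fun _ => Cb * ‖Jmap r b c‖)
  · exact fun q => (((hρs.continuous_fderiv (by simp)).comp
      (continuous_const.prodMk (continuous_id.prodMk continuous_const))).clm_comp
      continuous_const).aestronglyMeasurable
  · intro q
    refine Filter.Eventually.of_forall fun xb => ?_
    by_cases hxb : xb ∈ K
    · rw [Set.indicator_of_mem hxb]
      calc ‖(fderiv ℝ ρ (q.1, xb, q.2)).comp (Jmap r b c)‖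
          ≤ ‖fderiv ℝ ρ (q.1, xb, q.2)‖ * ‖Jmap r b c‖ := ContinuousLinearMap.opNorm_comp_le _ _
        _ ≤ Cb * ‖Jmap r b c‖ := mul_le_mul_of_nonneg_right (hCb _) (norm_nonneg _)
    · rw [Set.indicator_of_notMem hxb, hvanish q xb hxb, ContinuousLinearMap.zero_comp]
      simp
  · exact (MeasureTheory.integrableOn_const hKc.measure_lt_top.ne).integrable_indicator
      hKc.measurableSet
  · refine Filter.Eventually.of_forall fun xb => ?_
    exact ((hρs.continuous_fderiv (by simp)).comp
      (continuous_fst.prodMk (continuous_const.prodMk continuous_snd))).clm_comp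
      continuous_const

lemma marg_contDiff (hρs : ContDiff ℝ (⊤ : ℕ∞) ρ) (hsupp : HasCompactSupport ρ) :
    ContDiff ℝ 1 (fun q : (Fin r → ℝ) × (Fin c → ℝ) => ∫ xb, ρ (q.1, xb, q.2)) := by
  rw [contDiff_one_iff_fderiv]
  have hfd : ∀ p, fderiv ℝ (fun q : (Fin r → ℝ) × (Fin c → ℝ) => ∫ xb, ρ (q.1, xb, q.2)) p
      = ∫ xb, (fderiv ℝ ρ (p.1, xb, p.2)).comp (Jmap r b c) :=
    fun p => (marg_hasFDerivAt ρ hρs hsupp p).fderiv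
  refine ⟨fun p => (marg_hasFDerivAt ρ hρs hsupp p).differentiableAt, ?_⟩
  rw [show (fderiv ℝ (fun q : (Fin r → ℝ) × (Fin c → ℝ) => ∫ xb, ρ (q.1, xb, q.2)))
      = fun p => ∫ xb, (fderiv ℝ ρ (p.1, xb, p.2)).comp (Jmap r b c) from funext hfd]
  exact marg_fderiv_continuous ρ hρs hsupp

lemma marg_hasCompactSupport (hsupp : HasCompactSupport ρ) :
    HasCompactSupport (fun q : (Fin r → ℝ) × (Fin c → ℝ) => ∫ xb, ρ (q.1, xb, q.2)) := by
  apply HasCompactSupport.intro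
    (K := (fun z : (Fin r → ℝ) × (Fin b → ℝ) × (Fin c → ℝ) => (z.1, z.2.2)) '' tsupport ρ)
    (hsupp.image (continuous_fst.prodMk continuous_snd.snd))
  intro q hq
  have : ∀ xb, ρ (q.1, xb, q.2) = 0 := by
    intro xb
    by_contra hne
    exact hq ⟨(q.1, xb, q.2), subset_tsupport ρ hne, rfl⟩
  simp [this]

end Marg

open MeasureTheory Real


/-- principle of nil causality, deterministic part:
ℝⁿ = ℝ^r × ℝ^{s-r} × ℝ^{n-s} with coordinates (x_A, x_B, x_C).  If each F_i
(i ≤ r) does not depend on x_B — encoded by F i being a function of (x_A, x_C)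
only — and ρ_{A∪C} is the marginal of ρ over x_B, then
E[(1/ρ_A(X_A)) ∑_{i=1}^r ∫_{ℝ^{n-s}} ∂(F_i ρ_{A∪C})/∂x_i dx_C] = 0. -/
theorem statement6 {r b c : ℕ}
    (ρ : ((Fin r → ℝ) × (Fin b → ℝ) × (Fin c → ℝ)) → ℝ)
    (hρ_smooth : ContDiff ℝ (⊤ : ℕ∞) ρ) (hρ_supp : HasCompactSupport ρ)
    (hρ_nonneg : ∀ z, 0 ≤ ρ z) (hρ_prob : ∫ z, ρ z = 1)
    (F : Fin r → ((Fin r → ℝ) × (Fin c → ℝ)) → ℝ)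
    (hF_smooth : ∀ i, ContDiff ℝ (⊤ : ℕ∞) (F i))
    (ρA : (Fin r → ℝ) → ℝ)
    (hρA : ∀ xa, ρA xa = ∫ w : (Fin b → ℝ) × (Fin c → ℝ), ρ (xa, w.1, w.2))
    (ρAC : ((Fin r → ℝ) × (Fin c → ℝ)) → ℝ)
    (hρAC : ∀ xa xc, ρAC (xa, xc) = ∫ xb, ρ (xa, xb, xc))
    (hρA_pos : ∀ z : (Fin r → ℝ) × (Fin b → ℝ) × (Fin c → ℝ),
      ρ z ≠ 0 → 0 < ρA z.1)
    (hint : Integrable (fun z : (Fin r → ℝ) × (Fin b → ℝ) × (Fin c → ℝ) =>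
      ρ z * ((ρA z.1)⁻¹ *
        ∑ i, ∫ xc, pderiv' i (fun xa => F i (xa, xc) * ρAC (xa, xc)) z.1))) :
    (∫ z : (Fin r → ℝ) × (Fin b → ℝ) × (Fin c → ℝ),
        ρ z * ((ρA z.1)⁻¹ *
          ∑ i, ∫ xc, pderiv' i (fun xa => F i (xa, xc) * ρAC (xa, xc)) z.1))
      = 0 := by
  classical
  -- replace ρAC by the explicit marginal M
  set M : ((Fin r → ℝ) × (Fin c → ℝ)) → ℝ := fun q => ∫ xb, ρ (q.1, xb, q.2) with hM
  have hACm : ρAC = M := funext fun p => hρAC p.1 p.2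
  rw [hACm] at hint ⊢
  have hMC1 : ContDiff ℝ 1 M := marg_contDiff ρ hρ_smooth hρ_supp
  have hMsupp : HasCompactSupport M := marg_hasCompactSupport ρ hρ_supp
  have hMnn : ∀ q, 0 ≤ M q := fun q => integral_nonneg fun xb => hρ_nonneg _
  -- the functions G i = F i * M and their partial derivatives D i
  set G : Fin r → ((Fin r → ℝ) × (Fin c → ℝ)) → ℝ := fun i q => F i q * M q with hG
  have hGC1 : ∀ i, ContDiff ℝ 1 (G i) := fun i => ((hF_smooth i).of_le (by simp)).mul hMC1
  have hGsupp : ∀ i, HasCompactSupport (G i) := fun i => hMsupp.mul_left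
  set D : Fin r → ((Fin r → ℝ) × (Fin c → ℝ)) → ℝ :=
    fun i p => fderiv ℝ (G i) p (Pi.single i 1, 0) with hD
  have hslice : ∀ (i : Fin r) (xa : Fin r → ℝ) (xc : Fin c → ℝ),
      pderiv' i (fun xa' => F i (xa', xc) * M (xa', xc)) xa = D i (xa, xc) := by
    intro i xa xc
    have hk : HasFDerivAt (fun xa' : Fin r → ℝ => (xa', xc))
        (ContinuousLinearMap.inl ℝ _ _) xa := hasFDerivAt_prodMk_left _ _
    have hcomp : HasFDerivAt (fun xa' => F i (xa', xc) * M (xa', xc))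
        ((fderiv ℝ (G i) (xa, xc)).comp (ContinuousLinearMap.inl ℝ _ _)) xa :=
      by have h := ((((hGC1 i).differentiable one_ne_zero) (xa, xc)).hasFDerivAt).comp xa hk; exact h
    unfold pderiv'
    rw [hcomp.fderiv]
    simp [hD]
  have hDcont : ∀ i, Continuous (D i) :=
    fun i => ((hGC1 i).continuous_fderiv one_ne_zero).clm_apply continuous_const
  have hDsupp : ∀ i, HasCompactSupport (D i) := fun i =>
    ((hGsupp i).fderiv (𝕜 := ℝ)).comp_left
      (g := fun L : ((Fin r → ℝ) × (Fin c → ℝ)) →L[ℝ] ℝ => L (Pi.single i 1, 0)) rfl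
  have hDint : ∀ i, Integrable (D i) :=
    fun i => (hDcont i).integrable_of_hasCompactSupport (hDsupp i)
  have hDint' : ∀ i, Integrable (D i)
      ((volume : Measure (Fin r → ℝ)).prod (volume : Measure (Fin c → ℝ))) := by
    intro i
    have := hDint i
    rwa [MeasureTheory.Measure.volume_eq_prod] at this
  -- inner xa-integrals of D vanish
  have hzero : ∀ (i : Fin r) (xc : Fin c → ℝ), (∫ xa, D i (xa, xc)) = 0 := by
    intro i xc
    have hsC1 : ContDiff ℝ 1 (fun xa => G i (xa, xc)) :=
      (hGC1 i).comp (contDiff_id.prodMk contDiff_const)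
    have hsCS : HasCompactSupport (fun xa => G i (xa, xc)) := by
      apply HasCompactSupport.intro (K := Prod.fst '' tsupport (G i))
        ((hGsupp i).image continuous_fst)
      intro xa hxa
      by_contra hne
      exact hxa ⟨(xa, xc), subset_tsupport _ hne, rfl⟩
    have h0 := integral_pderiv_zero i _ hsC1 hsCS
    rw [← h0]
    congr 1
    funext xa
    exact (hslice i xa xc).symm
  -- S vanishes where ρA vanishes
  have hSvan : ∀ xa, ρA xa = 0 →
      (∑ i, ∫ xc, pderiv' i (fun xa' => F i (xa', xc) * M (xa', xc)) xa) = 0 := by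
    intro xa h0
    have hslice_cont : Continuous (fun w : (Fin b → ℝ) × (Fin c → ℝ) => ρ (xa, w)) :=
      hρ_smooth.continuous.comp (continuous_const.prodMk continuous_id)
    have hslice_int : Integrable (fun w : (Fin b → ℝ) × (Fin c → ℝ) => ρ (xa, w)) := by
      apply hslice_cont.integrable_of_hasCompactSupport
      apply HasCompactSupport.intro (K := Prod.snd '' tsupport ρ) (hρ_supp.image continuous_snd)
      intro w hw
      by_contra hne
      exact hw ⟨(xa, w), subset_tsupport ρ hne, rfl⟩
    have h00 : ∫ w : (Fin b → ℝ) × (Fin c → ℝ), ρ (xa, w) = 0 := (hρA xa).symm.trans h0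
    have hae : (fun w : (Fin b → ℝ) × (Fin c → ℝ) => ρ (xa, w)) =ᵐ[volume] 0 :=
      (integral_eq_zero_iff_of_nonneg (fun w => hρ_nonneg _) hslice_int).1 h00
    have hallw : ∀ w : (Fin b → ℝ) × (Fin c → ℝ), ρ (xa, w) = 0 := by
      have := (hslice_cont.ae_eq_iff_eq volume continuous_const).1 hae
      exact fun w => congrFun this w
    have hMz : ∀ xc, M (xa, xc) = 0 := by
      intro xc
      rw [hM]
      simp only
      rw [show (fun xb => ρ (xa, xb, xc)) = fun _ => (0:ℝ) from funext fun xb => hallw (xb, xc)]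
      simp
    have hpz : ∀ (i : Fin r) (xc : Fin c → ℝ),
        pderiv' i (fun xa' => F i (xa', xc) * M (xa', xc)) xa = 0 := by
      intro i xc
      have hFd : DifferentiableAt ℝ (fun xa' : Fin r → ℝ => F i (xa', xc)) xa :=
        (((hF_smooth i).comp (contDiff_id.prodMk contDiff_const)).differentiable (by simp)) xa
      have hMd : DifferentiableAt ℝ (fun xa' : Fin r → ℝ => M (xa', xc)) xa :=
        ((hMC1.comp (contDiff_id.prodMk contDiff_const)).differentiable one_ne_zero) xa
      have hmin : IsLocalMin (fun xa' : Fin r → ℝ => M (xa', xc)) xa :=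
        Filter.Eventually.of_forall fun y => by
          show M (xa, xc) ≤ M (y, xc)
          rw [hMz xc]; exact hMnn (y, xc)
      have hfm0 : fderiv ℝ (fun xa' : Fin r → ℝ => M (xa', xc)) xa = 0 :=
        hmin.fderiv_eq_zero
      unfold pderiv'
      rw [fderiv_fun_mul hFd hMd, hfm0, hMz xc]
      simp
    simp only [hpz]
    simp
  -- Fubini over z and cancellation of ρA
  have hint' : Integrable (fun z : (Fin r → ℝ) × (Fin b → ℝ) × (Fin c → ℝ) =>
      ρ z * ((ρA z.1)⁻¹ *
        ∑ i, ∫ xc, pderiv' i (fun xa => F i (xa, xc) * M (xa, xc)) z.1))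
      ((volume : Measure (Fin r → ℝ)).prod
        (volume : Measure ((Fin b → ℝ) × (Fin c → ℝ)))) := by
    rwa [MeasureTheory.Measure.volume_eq_prod] at hint
  rw [MeasureTheory.Measure.volume_eq_prod, MeasureTheory.integral_prod _ hint']
  have hstep : ∀ xa : Fin r → ℝ,
      (∫ w : (Fin b → ℝ) × (Fin c → ℝ), ρ (xa, w) * ((ρA xa)⁻¹ *
        ∑ i, ∫ xc, pderiv' i (fun xa' => F i (xa', xc) * M (xa', xc)) xa))
      = ∑ i, ∫ xc, pderiv' i (fun xa' => F i (xa', xc) * M (xa', xc)) xa := by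
    intro xa
    rw [integral_mul_const]
    have hmarg : (∫ w : (Fin b → ℝ) × (Fin c → ℝ), ρ (xa, w)) = ρA xa := (hρA xa).symm
    rw [hmarg]
    by_cases h0 : ρA xa = 0
    · rw [h0, hSvan xa h0]
      simp
    · rw [← mul_assoc, mul_inv_cancel₀ h0, one_mul]
  rw [show (fun xa : Fin r → ℝ => ∫ w : (Fin b → ℝ) × (Fin c → ℝ),
      ρ (xa, w) * ((ρA (xa, w).1)⁻¹ *
        ∑ i, ∫ xc, pderiv' i (fun xa' => F i (xa', xc) * M (xa', xc)) (xa, w).1))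
      = fun xa => ∑ i, ∫ xc, pderiv' i (fun xa' => F i (xa', xc) * M (xa', xc)) xa
      from funext fun xa => hstep xa]
  -- final: the integral of the sum of divergences vanishes
  have hterm_int : ∀ i : Fin r, Integrable
      (fun xa => ∫ xc, pderiv' i (fun xa' => F i (xa', xc) * M (xa', xc)) xa) := by
    intro i
    have : (fun xa => ∫ xc, pderiv' i (fun xa' => F i (xa', xc) * M (xa', xc)) xa)
        = fun xa => ∫ xc, D i (xa, xc) := by
      funext xa
      congr 1
      funext xc
      exact hslice i xa xc
    rw [this]
    exact (hDint' i).integral_prod_left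
  rw [integral_finset_sum _ fun i _ => hterm_int i]
  have hterm0 : ∀ i : Fin r,
      (∫ xa, ∫ xc, pderiv' i (fun xa' => F i (xa', xc) * M (xa', xc)) xa) = 0 := by
    intro i
    have h1 : (fun xa => ∫ xc, pderiv' i (fun xa' => F i (xa', xc) * M (xa', xc)) xa)
        = fun xa => ∫ xc, D i (xa, xc) := by
      funext xa; congr 1; funext xc; exact hslice i xa xc
    rw [h1]
    rw [show (∫ xa, ∫ xc, D i (xa, xc)) = ∫ p, D i p
        ∂((volume : Measure (Fin r → ℝ)).prod (volume : Measure (Fin c → ℝ)))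
      from (MeasureTheory.integral_prod _ (hDint' i)).symm]
    rw [MeasureTheory.integral_prod_symm _ (hDint' i)]
    simp only [hzero]
    simp
  simp only [hterm0]
  simp
end

section
/- With the notation of the linear information flow formula, if a_{ij} = 0 for all i ∈ {1,…,r} and j ∈ {r+1,…,s} (subsystem A's drift does not depend on x_B), then T_{B→A} = ∑_{i=1}^r [ ∑_{j=1}^r σ''_{ij} ( ∑_{k=1}^s a_{ik} σ_{kj} ) − a_{ii} ] = 0, where σ''_{ij} are entries of diag(Σ_A^{-1}, I_{s−r}) and Σ_A is the covariance of coordinates 1..r. -/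
open Matrix

theorem sum_dite_lt {s r : ℕ} (g : {i : Fin s // i.val < r} → ℝ) :
    ∑ k : Fin s, (if h : k.val < r then g ⟨k, h⟩ else 0) = ∑ k : {i : Fin s // i.val < r}, g k := by
  rw [← Finset.sum_filter_of_ne (p := fun i : Fin s => i.val < r)
      (fun x _ h => by by_contra hc; simp [hc] at h)]
  rw [Finset.sum_subtype (p := fun i : Fin s => i.val < r) _ (by simp)
      (fun k => if h : k.val < r then g ⟨k, h⟩ else 0)]
  exact Finset.sum_congr rfl fun a _ => by simp [a.2]


/-- in the linear information-flow formula, if a_{ij} = 0 for all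
i ∈ {1..r}, j ∈ {r+1..s} (subsystem A's drift does not depend on x_B), then
T_{B→A} = ∑_{i=1}^r [ ∑_{j=1}^r σ''_{ij} (∑_{k=1}^s a_{ik} σ_{kj}) − a_{ii} ] = 0,
where σ'' = diag(Σ_A⁻¹, I) and Σ_A is the covariance of coordinates 1..r. -/
theorem statement9 {s : ℕ} (r : ℕ) (hr : r ≤ s)
    (S : Matrix (Fin s) (Fin s) ℝ) (hS : S.PosDef)
    (A : Matrix (Fin s) (Fin s) ℝ)
    (hA : ∀ i j : Fin s, i.val < r → r ≤ j.val → A i j = 0) :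
    ∑ i : Fin s,
      (if hi : i.val < r then
        (∑ j : Fin s,
          if hj : j.val < r then
            ((S.submatrix (fun a : {i : Fin s // i.val < r} => a.val)
                (fun a : {i : Fin s // i.val < r} => a.val))⁻¹ ⟨i, hi⟩ ⟨j, hj⟩) *
              (∑ k : Fin s, A i k * S k j)
          else 0)
        - A i i
      else 0)
    = 0 := by
  classical
  set f : {i : Fin s // i.val < r} → Fin s := fun a => a.val with hf
  set Sr : Matrix {i : Fin s // i.val < r} {i : Fin s // i.val < r} ℝ := S.submatrix f f with hSrdef
  have hsym : ∀ a b, S a b = S b a := fun a b => by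
    conv_lhs => rw [← hS.1]
    simp [conjTranspose_apply]
  -- Sr is positive definite, hence invertible
  have hSrPD : Sr.PosDef := by
    refine Matrix.PosDef.of_dotProduct_mulVec_pos ?_ ?_
    · ext a b
      simp only [hSrdef, conjTranspose_apply, submatrix_apply, star_trivial]
      exact hsym (f b) (f a)
    · intro x hx
      set y : Fin s → ℝ := fun k => if h : k.val < r then x ⟨k, h⟩ else 0 with hy
      have hy0 : y ≠ 0 := by
        intro h
        apply hx
        funext a
        have := congrFun h (f a)
        simpa [hy, hf, a.2] using this
      have key : star y ⬝ᵥ S *ᵥ y = star x ⬝ᵥ Sr *ᵥ x := by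
        simp only [dotProduct, Matrix.mulVec, dotProduct, hSrdef, submatrix_apply,
          star_trivial]
        calc ∑ a : Fin s, y a * ∑ b : Fin s, S a b * y b
            = ∑ a : Fin s, (if h : a.val < r then
                x ⟨a, h⟩ * ∑ b : {i : Fin s // i.val < r}, S a (f b) * x b else 0) := by
              refine Finset.sum_congr rfl fun a _ => ?_
              by_cases ha : a.val < r
              · simp only [ha, dif_pos]
                have h1 : y a = x ⟨a, ha⟩ := by simp [hy, ha]
                rw [h1]
                congr 1
                rw [← sum_dite_lt (fun b => S a (f b) * x b)]
                refine Finset.sum_congr rfl fun b _ => ?_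
                by_cases hb : b.val < r
                · simp [hb, hy, hf]
                · simp [hb, hy]
              · simp [ha, hy]
          _ = ∑ a : {i : Fin s // i.val < r},
                x a * ∑ b : {i : Fin s // i.val < r}, S (f a) (f b) * x b :=
              sum_dite_lt
                (fun a => x a * ∑ b : {i : Fin s // i.val < r}, S (f a) (f b) * x b)
      rw [← key]
      exact hS.dotProduct_mulVec_pos hy0
  have hinv : Sr⁻¹ * Sr = 1 :=
    Matrix.nonsing_inv_mul Sr (isUnit_iff_ne_zero.mpr hSrPD.det_pos.ne')
  -- main computation
  refine Finset.sum_eq_zero fun i _ => ?_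
  by_cases hi : i.val < r
  · simp only [hi, dif_pos]
    rw [sub_eq_zero]
    have hinner : ∀ j : Fin s, ∑ k : Fin s, A i k * S k j
        = ∑ k : {i : Fin s // i.val < r}, A i (f k) * S (f k) j := by
      intro j
      rw [← sum_dite_lt (fun k => A i (f k) * S (f k) j)]
      refine Finset.sum_congr rfl fun k _ => ?_
      by_cases hk : k.val < r
      · simp [hk, hf]
      · simp [hk, hA i k hi (le_of_not_gt hk)]
    calc ∑ j : Fin s, (if hj : j.val < r then
            Sr⁻¹ ⟨i, hi⟩ ⟨j, hj⟩ * ∑ k : Fin s, A i k * S k j else 0)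
        = ∑ j : {i : Fin s // i.val < r},
            Sr⁻¹ ⟨i, hi⟩ j * ∑ k : {i : Fin s // i.val < r}, A i (f k) * S (f k) (f j) := by
          rw [← sum_dite_lt (fun j => Sr⁻¹ ⟨i, hi⟩ j *
              ∑ k : {i : Fin s // i.val < r}, A i (f k) * S (f k) (f j))]
          refine Finset.sum_congr rfl fun j _ => ?_
          by_cases hj : j.val < r
          · simp only [hj, dif_pos]
            rw [hinner j]
          · simp [hj]
      _ = ∑ j : {i : Fin s // i.val < r}, ∑ k : {i : Fin s // i.val < r},
            Sr⁻¹ ⟨i, hi⟩ j * (A i (f k) * S (f k) (f j)) := by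
          refine Finset.sum_congr rfl fun j _ => ?_
          rw [Finset.mul_sum]
      _ = ∑ k : {i : Fin s // i.val < r}, ∑ j : {i : Fin s // i.val < r},
            Sr⁻¹ ⟨i, hi⟩ j * (A i (f k) * S (f k) (f j)) := Finset.sum_comm
      _ = ∑ k : {i : Fin s // i.val < r}, A i (f k) *
            ∑ j : {i : Fin s // i.val < r}, Sr⁻¹ ⟨i, hi⟩ j * Sr j k := by
          refine Finset.sum_congr rfl fun k _ => ?_
          rw [Finset.mul_sum]
          refine Finset.sum_congr rfl fun j _ => ?_
          simp only [hSrdef, submatrix_apply]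
          rw [hsym (f k) (f j)]
          ring
      _ = A i i := by
          have hone : ∀ k : {i : Fin s // i.val < r},
              ∑ j : {i : Fin s // i.val < r}, Sr⁻¹ ⟨i, hi⟩ j * Sr j k
              = (1 : Matrix {i : Fin s // i.val < r} {i : Fin s // i.val < r} ℝ) ⟨i, hi⟩ k := by
            intro k
            rw [← hinv]
            simp [Matrix.mul_apply]
          simp only [hone, Matrix.one_apply]
          rw [Finset.sum_eq_single (⟨i, hi⟩ : {i : Fin s // i.val < r})]
          · simp [hf]
          · intro b _ hb
            simp [Ne.symm hb]
          · simp
  · simp [hi]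
end
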